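/- arXiv:2207.02131 — 3 statements merged into one kernel-verified Lean document; each statement's English description precedes it below -/
import Mathlib

section
/- Let p, n be natural numbers with 0 < p < n, let X be a centered p×n real data matrix with QR factorization (1/√(n−1)) • Xᵀ = Q * R where Qᵀ * Q = 1 and R is upper triangular and invertible, and let w : ℝ → ℝ. Define M(X) = cov(X)^{−1/2} * cov_w(X) * cov(X)^{−1/2} and M̃(X) = (((n:ℝ)−1)/n) • Qᵀ * Matrix.diagonal (fun i => w(((n:ℝ)−1) * q i)) * Q. Then M(X) and M̃(X) have the same characteristic polynomial (hence the same eigenvalues with multiplicities), so any function of the eigenvalues of M(X) can be computed from Q alone. -/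
/-!
Rescaled, the QR factorization reads `c • Xᵀ = Q * R` with `c ^ 2 = (n - 1)⁻¹`. Then
`cov X = Rᵀ * R`, the Mahalanobis distances are `(n - 1) * q i`, and
`cov_w X = ((n - 1) / n) • Rᵀ * K * R` with `K = Qᵀ * Diag(w((n - 1) q i)) * Q`.
Since `S * S = Rᵀ * R` forces `R * S⁻¹ * S⁻¹ * Rᵀ = 1`, cycling the factor `R * S⁻¹` with
`charpoly (A * B) = charpoly (B * A)` turns `S⁻¹ * cov_w X * S⁻¹` into `((n - 1) / n) • K`.
-/

open Matrix

/-- The sample covariance matrix of a centered data matrix. -/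
noncomputable def cov {p n : ℕ} (X : Matrix (Fin p) (Fin n) ℝ) :
    Matrix (Fin p) (Fin p) ℝ :=
  ((n : ℝ) - 1)⁻¹ • (X * Xᵀ)

/-- The squared Mahalanobis distance of observation `i` of the centered data matrix `X`. -/
noncomputable def mahalanobisSq {p n : ℕ} (X : Matrix (Fin p) (Fin n) ℝ) (i : Fin n) : ℝ :=
  (fun k => X k i) ⬝ᵥ ((cov X)⁻¹ *ᵥ (fun k => X k i))

/-- The one-step M-scatter matrix of `X` with weight function `w`. -/
noncomputable def covW {p n : ℕ} (w : ℝ → ℝ) (X : Matrix (Fin p) (Fin n) ℝ) :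
    Matrix (Fin p) (Fin p) ℝ :=
  (n : ℝ)⁻¹ • ∑ i, w (mahalanobisSq X i) • vecMulVec (fun k => X k i) (fun k => X k i)

namespace Matrix

variable {m n α : Type*} [Fintype n]

theorem mul_diagonal_mul_transpose_eq_sum [DecidableEq n] [CommSemiring α]
    (X : Matrix m n α) (d : n → α) :
    X * diagonal d * Xᵀ = ∑ i, d i • vecMulVec (fun k => X k i) (fun k => X k i) := by
  ext k l
  simp only [mul_apply, diagonal_apply, transpose_apply, sum_apply, smul_apply,
    vecMulVec_apply, smul_eq_mul, mul_ite, mul_zero, Finset.sum_ite_eq', Finset.mem_univ,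
    if_true]
  exact Finset.sum_congr rfl fun i _ => by ring

theorem sq_smul_mul_mul_transpose_of_smul_transpose_eq [Fintype m] [CommSemiring α]
    {X : Matrix m n α} {Q : Matrix n m α} {R : Matrix m m α} {c : α}
    (h : c • Xᵀ = Q * R) (D : Matrix n n α) :
    c ^ 2 • (X * D * Xᵀ) = Rᵀ * (Qᵀ * D * Q) * R := by
  have hX : c • X = Rᵀ * Qᵀ := by
    rw [← transpose_transpose (c • X), transpose_smul, h, transpose_mul]
  calc c ^ 2 • (X * D * Xᵀ) = (c • X) * D * (c • Xᵀ) := by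
        rw [Matrix.smul_mul, Matrix.smul_mul, Matrix.mul_smul, smul_smul, sq]
    _ = Rᵀ * (Qᵀ * D * Q) * R := by rw [hX, h]; simp only [Matrix.mul_assoc]

variable [Fintype m] [DecidableEq m] [CommRing α]

theorem vecMul_dotProduct_inv_mulVec_vecMul {R : Matrix m m α} (hR : IsUnit R.det)
    (v : m → α) : (v ᵥ* R) ⬝ᵥ ((Rᵀ * R)⁻¹ *ᵥ (v ᵥ* R)) = v ⬝ᵥ v := by
  have hRT : IsUnit Rᵀ.det := by rwa [det_transpose]
  have hwhiten : (Rᵀ * R)⁻¹ *ᵥ (v ᵥ* R) = R⁻¹ *ᵥ v := by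
    rw [mul_inv_rev, ← mulVec_transpose, mulVec_mulVec, Matrix.mul_assoc,
      nonsing_inv_mul _ hRT, Matrix.mul_one]
  rw [hwhiten, ← dotProduct_mulVec, mulVec_mulVec, mul_nonsing_inv _ hR, one_mulVec]

theorem charpoly_inv_mul_mul_inv_of_mul_self_eq {R S : Matrix m m α} (hR : IsUnit R.det)
    (hS : S * S = Rᵀ * R) (K : Matrix m m α) :
    (S⁻¹ * (Rᵀ * K * R) * S⁻¹).charpoly = K.charpoly := by
  have hRT : IsUnit Rᵀ.det := by rwa [det_transpose]
  have hunit : R * S⁻¹ * (S⁻¹ * Rᵀ) = 1 := by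
    rw [Matrix.mul_assoc, ← Matrix.mul_assoc S⁻¹, ← mul_inv_rev, hS, mul_inv_rev,
      Matrix.mul_assoc R⁻¹, nonsing_inv_mul _ hRT, Matrix.mul_one, mul_nonsing_inv _ hR]
  calc (S⁻¹ * (Rᵀ * K * R) * S⁻¹).charpoly
      = ((S⁻¹ * Rᵀ) * (K * (R * S⁻¹))).charpoly := by simp only [Matrix.mul_assoc]
    _ = (K * (R * S⁻¹ * (S⁻¹ * Rᵀ))).charpoly := by
        rw [charpoly_mul_comm]; simp only [Matrix.mul_assoc]
    _ = K.charpoly := by rw [hunit, Matrix.mul_one]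

end Matrix

section QR

variable {p n : ℕ} {X : Matrix (Fin p) (Fin n) ℝ} {Q : Matrix (Fin n) (Fin p) ℝ}
  {R : Matrix (Fin p) (Fin p) ℝ} {c : ℝ}

theorem cov_eq_of_smul_transpose_eq (hQ : Qᵀ * Q = 1) (hc : c ^ 2 = ((n : ℝ) - 1)⁻¹)
    (hX : c • Xᵀ = Q * R) : cov X = Rᵀ * R := by
  have h := sq_smul_mul_mul_transpose_of_smul_transpose_eq hX 1
  rwa [Matrix.mul_one, Matrix.mul_one, hQ, Matrix.mul_one, hc] at h

theorem mahalanobisSq_eq_of_smul_transpose_eq (hQ : Qᵀ * Q = 1) (hR : IsUnit R.det)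
    (hn : (n : ℝ) - 1 ≠ 0) (hc : c ^ 2 = ((n : ℝ) - 1)⁻¹) (hX : c • Xᵀ = Q * R) (i : Fin n) :
    mahalanobisSq X i = ((n : ℝ) - 1) * ∑ j, Q i j ^ 2 := by
  have hcol : c • (fun k => X k i) = Q i ᵥ* R := by
    rw [← mul_apply_eq_vecMul, ← hX]; rfl
  have h := vecMul_dotProduct_inv_mulVec_vecMul hR (Q i)
  rw [← hcol, ← cov_eq_of_smul_transpose_eq hQ hc hX, mulVec_smul, smul_dotProduct,
    dotProduct_smul, smul_eq_mul, smul_eq_mul, ← mul_assoc, ← sq, hc] at h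
  rw [mahalanobisSq, eq_inv_mul_iff_mul_eq₀ (inv_ne_zero hn) |>.mpr h]
  simp only [inv_inv, dotProduct, sq]

theorem covW_eq_of_smul_transpose_eq (hQ : Qᵀ * Q = 1) (hR : IsUnit R.det)
    (hn : (n : ℝ) - 1 ≠ 0) (hc : c ^ 2 = ((n : ℝ) - 1)⁻¹) (hX : c • Xᵀ = Q * R)
    (w : ℝ → ℝ) :
    covW w X = (((n : ℝ) - 1) / n) •
      (Rᵀ * (Qᵀ * diagonal (fun i => w (((n : ℝ) - 1) * ∑ j, Q i j ^ 2)) * Q) * R) := by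
  rw [covW, ← mul_diagonal_mul_transpose_eq_sum,
    ← sq_smul_mul_mul_transpose_of_smul_transpose_eq hX, hc, smul_smul, div_eq_mul_inv,
    mul_comm ((n : ℝ) - 1), mul_assoc, mul_inv_cancel₀ hn, mul_one]
  simp only [mahalanobisSq_eq_of_smul_transpose_eq hQ hR hn hc hX]

end QR

theorem stmt_7_general {p n : ℕ} (hp : 0 < p) (hpn : p < n)
    (X : Matrix (Fin p) (Fin n) ℝ)
    (Q : Matrix (Fin n) (Fin p) ℝ) (R : Matrix (Fin p) (Fin p) ℝ)
    (hQ : Qᵀ * Q = 1)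
    (hRdet : IsUnit R.det)
    (hQR : ((n : ℝ) - 1) ^ (-(1 : ℝ)/2) • Xᵀ = Q * R)
    (w : ℝ → ℝ)
    (S : Matrix (Fin p) (Fin p) ℝ)
    (hSsq : S * S = cov X) :
    (S⁻¹ * covW w X * S⁻¹).charpoly =
      ((((n : ℝ) - 1) / (n : ℝ)) •
        (Qᵀ * Matrix.diagonal (fun i => w (((n : ℝ) - 1) * ∑ j, (Q i j) ^ 2)) * Q)).charpoly := by
  have hn : (0 : ℝ) < (n : ℝ) - 1 := by
    have : (2 : ℝ) ≤ n := by exact_mod_cast (by omega : 2 ≤ n)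
    linarith
  have hc : (((n : ℝ) - 1) ^ (-(1 : ℝ)/2)) ^ 2 = ((n : ℝ) - 1)⁻¹ := by
    rw [← Real.rpow_natCast, ← Real.rpow_mul hn.le]
    norm_num [Real.rpow_neg_one]
  have hS : S * S = Rᵀ * R := hSsq.trans (cov_eq_of_smul_transpose_eq hQ hc hQR)
  rw [covW_eq_of_smul_transpose_eq hQ hRdet hn.ne' hc hQR]
  convert charpoly_inv_mul_mul_inv_of_mul_self_eq hRdet hS _ using 3
  simp only [Matrix.mul_smul, Matrix.smul_mul]

/-- The ICS matrix `M(X) = cov(X)^{-1/2} * cov_w(X) * cov(X)^{-1/2}` and the matrix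
`M̃(X) = ((n-1)/n) • Qᵀ * Diag(w((n-1) q_i)) * Q` have the same characteristic polynomial,
hence the same eigenvalues with multiplicities. -/
theorem stmt_7 {p n : ℕ} (hp : 0 < p) (hpn : p < n)
    (X : Matrix (Fin p) (Fin n) ℝ)
    (hXc : X *ᵥ (fun _ => (1 : ℝ)) = 0)
    (Q : Matrix (Fin n) (Fin p) ℝ) (R : Matrix (Fin p) (Fin p) ℝ)
    (hQ : Qᵀ * Q = 1)
    (hR : R.BlockTriangular id)
    (hRdet : IsUnit R.det)
    (hQR : ((n : ℝ) - 1) ^ (-(1 : ℝ)/2) • Xᵀ = Q * R)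
    (w : ℝ → ℝ)
    (S : Matrix (Fin p) (Fin p) ℝ)
    (hS : S.PosSemidef)
    (hSsq : S * S = cov X) :
    (S⁻¹ * covW w X * S⁻¹).charpoly =
      ((((n : ℝ) - 1) / (n : ℝ)) •
        (Qᵀ * Matrix.diagonal (fun i => w (((n : ℝ) - 1) * ∑ j, (Q i j) ^ 2)) * Q)).charpoly :=
  stmt_7_general hp hpn X Q R hQ hRdet hQR w S hSsq
end

section
/- (Correctness of the QR-based ICS algorithm) Let p, n be natural numbers with 0 < p < n, let X be a centered p×n real data matrix with QR factorization (1/√(n−1)) • Xᵀ = Q * R where Qᵀ * Q = 1 and R is upper triangular and invertible, and let w : ℝ → ℝ. Set M̃(X) = (((n:ℝ)−1)/n) • Qᵀ * Matrix.diagonal (fun i => w(((n:ℝ)−1) * q i)) * Q and suppose M̃(X) = U * D * Uᵀ where U is orthogonal (Uᵀ * U = 1) and D is diagonal. Then the matrix B = Uᵀ * (Rᵀ)⁻¹ jointly diagonalizes the two scatter matrices: B * cov(X) * Bᵀ = 1 and B * cov_w(X) * Bᵀ = D. -/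
open Matrix

/-! With `s = √(n - 1)` the QR factorization reads `X = s • Rᵀ * Qᵀ`. Hence `cov X = Rᵀ * R`,
and `Xᵀ * (cov X)⁻¹ * X = (n - 1) • Q * Qᵀ`, whose diagonal gives the Mahalanobis distances
`(n - 1) * q i`. Therefore `cov_w X = Rᵀ * M̃(X) * R`, and `B = Uᵀ * (Rᵀ)⁻¹` undoes the outer `R`,
leaving `Uᵀ * 1 * U = 1` and `Uᵀ * (U * D * Uᵀ) * U = D`. -/

namespace Matrix

variable {m n R : Type*} [CommRing R]

lemma mul_diagonal_mul_transpose_eq_sum_vecMulVec [Fintype n] [DecidableEq n]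
    (A : Matrix m n R) (f : n → R) :
    A * diagonal f * Aᵀ = ∑ i, f i • vecMulVec (fun k => A k i) (fun k => A k i) := by
  ext k l
  simp only [mul_apply (M := A * diagonal f), mul_diagonal, sum_apply, smul_apply, vecMulVec_apply,
    transpose_apply, smul_eq_mul]
  refine Finset.sum_congr rfl fun i _ => ?_
  ring

lemma transpose_nonsing_inv_conj [Fintype m] [DecidableEq m] {A : Matrix m m R}
    (hA : IsUnit A.det) (V M : Matrix m m R) :
    (Vᵀ * (Aᵀ)⁻¹) * (Aᵀ * M * A) * (Vᵀ * (Aᵀ)⁻¹)ᵀ = Vᵀ * M * V := by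
  have hAt : IsUnit Aᵀ.det := by rwa [det_transpose]
  rw [transpose_mul, transpose_transpose, transpose_nonsing_inv, transpose_transpose]
  simp only [Matrix.mul_assoc, mul_nonsing_inv_cancel_left _ _ hA]
  rw [← Matrix.mul_assoc (Aᵀ)⁻¹, nonsing_inv_mul _ hAt, Matrix.one_mul]

end Matrix

lemma Real.rpow_neg_half {x : ℝ} (hx : 0 ≤ x) : x ^ (-(1 : ℝ) / 2) = (√x)⁻¹ := by
  rw [neg_div, Real.rpow_neg hx, Real.sqrt_eq_rpow]

section Scatter

variable {p n : ℕ}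

lemma covW_eq_mul_diagonal_mul_transpose (w : ℝ → ℝ) (X : Matrix (Fin p) (Fin n) ℝ) :
    covW w X = (n : ℝ)⁻¹ • (X * diagonal (fun i => w (mahalanobisSq X i)) * Xᵀ) := by
  rw [covW, mul_diagonal_mul_transpose_eq_sum_vecMulVec]

lemma mahalanobisSq_eq_diag (X : Matrix (Fin p) (Fin n) ℝ) (i : Fin n) :
    mahalanobisSq X i = (Xᵀ * (cov X)⁻¹ * X) i i := by
  rw [Matrix.mul_assoc, mul_apply']
  rfl

variable {X : Matrix (Fin p) (Fin n) ℝ} {Q : Matrix (Fin n) (Fin p) ℝ} {R : Matrix (Fin p) (Fin p) ℝ}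

lemma cov_eq_of_eq_sqrt_smul (hn : (1 : ℝ) < n) (hQ : Qᵀ * Q = 1)
    (hX : X = √((n : ℝ) - 1) • (Rᵀ * Qᵀ)) : cov X = Rᵀ * R := by
  rw [cov, hX, transpose_smul, Matrix.smul_mul, Matrix.mul_smul, smul_smul, smul_smul, mul_assoc,
    Real.mul_self_sqrt (sub_nonneg.2 hn.le), inv_mul_cancel₀ (sub_pos.2 hn).ne', one_smul,
    transpose_mul, transpose_transpose, transpose_transpose, Matrix.mul_assoc,
    ← Matrix.mul_assoc Qᵀ, hQ, Matrix.one_mul]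

lemma transpose_mul_cov_inv_mul_of_eq_sqrt_smul (hn : (1 : ℝ) < n) (hQ : Qᵀ * Q = 1)
    (hR : IsUnit R.det) (hX : X = √((n : ℝ) - 1) • (Rᵀ * Qᵀ)) :
    Xᵀ * (cov X)⁻¹ * X = ((n : ℝ) - 1) • (Q * Qᵀ) := by
  have hRt : IsUnit Rᵀ.det := by rwa [det_transpose]
  rw [cov_eq_of_eq_sqrt_smul hn hQ hX, Matrix.mul_inv_rev, hX, transpose_smul, transpose_mul,
    transpose_transpose, transpose_transpose, Matrix.smul_mul, Matrix.smul_mul, Matrix.mul_smul,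
    smul_smul, Real.mul_self_sqrt (sub_nonneg.2 hn.le)]
  congr 1
  simp only [Matrix.mul_assoc, mul_nonsing_inv_cancel_left _ _ hR,
    nonsing_inv_mul_cancel_left _ _ hRt]

lemma mahalanobisSq_eq_of_eq_sqrt_smul (hn : (1 : ℝ) < n) (hQ : Qᵀ * Q = 1) (hR : IsUnit R.det)
    (hX : X = √((n : ℝ) - 1) • (Rᵀ * Qᵀ)) (i : Fin n) :
    mahalanobisSq X i = ((n : ℝ) - 1) * ∑ j, (Q i j) ^ 2 := by
  rw [mahalanobisSq_eq_diag, transpose_mul_cov_inv_mul_of_eq_sqrt_smul hn hQ hR hX,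
    Matrix.smul_apply, smul_eq_mul, mul_apply]
  simp only [transpose_apply, sq]

lemma covW_eq_of_eq_sqrt_smul (hn : (1 : ℝ) < n) (hQ : Qᵀ * Q = 1) (hR : IsUnit R.det)
    (hX : X = √((n : ℝ) - 1) • (Rᵀ * Qᵀ)) (w : ℝ → ℝ) :
    covW w X = Rᵀ * ((((n : ℝ) - 1) / n) •
      (Qᵀ * diagonal (fun i => w (((n : ℝ) - 1) * ∑ j, (Q i j) ^ 2)) * Q)) * R := by
  simp only [covW_eq_mul_diagonal_mul_transpose, mahalanobisSq_eq_of_eq_sqrt_smul hn hQ hR hX]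
  rw [hX, transpose_smul, transpose_mul, transpose_transpose, transpose_transpose]
  simp only [Matrix.smul_mul, Matrix.mul_smul, smul_smul, Matrix.mul_assoc]
  rw [Real.mul_self_sqrt (sub_nonneg.2 hn.le), inv_mul_eq_div]

end Scatter

theorem stmt_8_general {p n : ℕ} (hp : 0 < p) (hpn : p < n)
    (X : Matrix (Fin p) (Fin n) ℝ)
    (Q : Matrix (Fin n) (Fin p) ℝ) (R : Matrix (Fin p) (Fin p) ℝ)
    (hQ : Qᵀ * Q = 1)
    (hRdet : IsUnit R.det)
    (hQR : ((n : ℝ) - 1) ^ (-(1 : ℝ)/2) • Xᵀ = Q * R)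
    (w : ℝ → ℝ)
    (U : Matrix (Fin p) (Fin p) ℝ) (hU : Uᵀ * U = 1)
    (d : Fin p → ℝ)
    (hUD : (((n : ℝ) - 1) / (n : ℝ)) •
        (Qᵀ * Matrix.diagonal (fun i => w (((n : ℝ) - 1) * ∑ j, (Q i j) ^ 2)) * Q) =
      U * Matrix.diagonal d * Uᵀ) :
    (Uᵀ * (Rᵀ)⁻¹) * cov X * (Uᵀ * (Rᵀ)⁻¹)ᵀ = 1 ∧
    (Uᵀ * (Rᵀ)⁻¹) * covW w X * (Uᵀ * (Rᵀ)⁻¹)ᵀ = Matrix.diagonal d := by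
  have hn : (1 : ℝ) < n := by exact_mod_cast (show 1 < n by omega)
  have hX : X = √((n : ℝ) - 1) • (Rᵀ * Qᵀ) := by
    rw [Real.rpow_neg_half (sub_nonneg.2 hn.le),
      inv_smul_eq_iff₀ (Real.sqrt_pos.2 (sub_pos.2 hn)).ne'] at hQR
    rw [← transpose_transpose X, hQR, transpose_smul, transpose_mul]
  constructor
  · rw [cov_eq_of_eq_sqrt_smul hn hQ hX]
    simpa only [Matrix.mul_one, hU] using transpose_nonsing_inv_conj hRdet U 1
  · rw [covW_eq_of_eq_sqrt_smul hn hQ hRdet hX, hUD, transpose_nonsing_inv_conj hRdet,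
      ← Matrix.mul_assoc, ← Matrix.mul_assoc, hU, Matrix.one_mul, Matrix.mul_assoc, hU,
      Matrix.mul_one]

/-- Correctness of the QR-based ICS algorithm: if
`M̃(X) = ((n-1)/n) • Qᵀ * Diag(w((n-1) q_i)) * Q = U * D * Uᵀ` with `U` orthogonal and
`D` diagonal, then `B = Uᵀ * (Rᵀ)⁻¹` jointly diagonalizes the two scatter matrices:
`B * cov(X) * Bᵀ = 1` and `B * cov_w(X) * Bᵀ = D`. -/
theorem stmt_8 {p n : ℕ} (hp : 0 < p) (hpn : p < n)
    (X : Matrix (Fin p) (Fin n) ℝ)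
    (hXc : X *ᵥ (fun _ => (1 : ℝ)) = 0)
    (Q : Matrix (Fin n) (Fin p) ℝ) (R : Matrix (Fin p) (Fin p) ℝ)
    (hQ : Qᵀ * Q = 1)
    (hR : R.BlockTriangular id)
    (hRdet : IsUnit R.det)
    (hQR : ((n : ℝ) - 1) ^ (-(1 : ℝ)/2) • Xᵀ = Q * R)
    (w : ℝ → ℝ)
    (U : Matrix (Fin p) (Fin p) ℝ) (hU : Uᵀ * U = 1)
    (d : Fin p → ℝ)
    (hUD : (((n : ℝ) - 1) / (n : ℝ)) •
        (Qᵀ * Matrix.diagonal (fun i => w (((n : ℝ) - 1) * ∑ j, (Q i j) ^ 2)) * Q) =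
      U * Matrix.diagonal d * Uᵀ) :
    (Uᵀ * (Rᵀ)⁻¹) * cov X * (Uᵀ * (Rᵀ)⁻¹)ᵀ = 1 ∧
    (Uᵀ * (Rᵀ)⁻¹) * covW w X * (Uᵀ * (Rᵀ)⁻¹)ᵀ = Matrix.diagonal d :=
  stmt_8_general hp hpn X Q R hQ hRdet hQR w U hU d hUD
end

section
/- Let p, n be natural numbers with 0 < p < n, let X be a centered p×n real data matrix with QR factorization (1/√(n−1)) • Xᵀ = Q * R where Qᵀ * Q = 1 and R is upper triangular, and suppose R = U * Σ * Vᵀ is a singular value decomposition of R with U, V orthogonal p×p matrices and Σ diagonal with nonnegative entries. Then (i) (1/√(n−1)) • Xᵀ = (Q * U) * Σ * Vᵀ with (Q * U)ᵀ * (Q * U) = 1 (an economy-size SVD of Xᵀ), (ii) cov(X) = V * Σ² * Vᵀ, and (iii) V * Σ * Vᵀ is the positive semidefinite symmetric square root of cov(X). -/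
/-! Since `Q` has orthonormal columns, `cov X = Rᵀ * R`; substituting `R = U Σ Vᵀ`, the orthogonal
factor `U` cancels, leaving `V Σ² Vᵀ`, and `V Σ Vᵀ` squares to the same matrix because `Vᵀ V = 1`. -/

open Matrix

section

variable {m n k : Type*} [Fintype m] [Fintype n] [DecidableEq m] {α : Type*} [CommRing α]

theorem transpose_mul_self_mul_of_transpose_mul_self_eq_one {Q : Matrix n m α}
    (hQ : Qᵀ * Q = 1) (A : Matrix m k α) : (Q * A)ᵀ * (Q * A) = Aᵀ * A := by
  rw [transpose_mul, Matrix.mul_assoc, ← Matrix.mul_assoc Qᵀ, hQ, Matrix.one_mul]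

theorem conj_mul_conj_of_transpose_mul_self_eq_one {V : Matrix n m α} (hV : Vᵀ * V = 1)
    (A B : Matrix m m α) : (V * A * Vᵀ) * (V * B * Vᵀ) = V * (A * B) * Vᵀ := by
  simp only [Matrix.mul_assoc]
  rw [← Matrix.mul_assoc Vᵀ V, hV, Matrix.one_mul]

end

theorem rpow_neg_half_mul_self {x : ℝ} (hx : 0 ≤ x) :
    x ^ (-(1 : ℝ) / 2) * x ^ (-(1 : ℝ) / 2) = x⁻¹ := by
  rw [← Real.rpow_add' hx (by norm_num)]
  norm_num [Real.rpow_neg_one]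

theorem cov_eq_transpose_mul_self_of_qr {p n : ℕ} (hn : 1 ≤ n) {X : Matrix (Fin p) (Fin n) ℝ}
    {Q : Matrix (Fin n) (Fin p) ℝ} {R : Matrix (Fin p) (Fin p) ℝ} (hQ : Qᵀ * Q = 1)
    (hQR : ((n : ℝ) - 1) ^ (-(1 : ℝ) / 2) • Xᵀ = Q * R) : cov X = Rᵀ * R := by
  have hn1 : (0 : ℝ) ≤ (n : ℝ) - 1 := by
    rw [sub_nonneg]
    exact_mod_cast hn
  rw [← transpose_mul_self_mul_of_transpose_mul_self_eq_one hQ R, ← hQR, transpose_smul,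
    transpose_transpose, Matrix.smul_mul, Matrix.mul_smul, smul_smul, rpow_neg_half_mul_self hn1, cov]

theorem posSemidef_conj_diagonal {p : Type*} [Fintype p] [DecidableEq p] (V : Matrix p p ℝ)
    {σ : p → ℝ} (hσ : ∀ i, 0 ≤ σ i) : (V * diagonal σ * Vᵀ).PosSemidef := by
  simpa [conjTranspose_eq_transpose_of_trivial] using
    (posSemidef_diagonal_iff.mpr hσ).mul_mul_conjTranspose_same V

theorem stmt_15_general {p n : ℕ} (hpn : p < n)
    (X : Matrix (Fin p) (Fin n) ℝ)
    (Q : Matrix (Fin n) (Fin p) ℝ) (R : Matrix (Fin p) (Fin p) ℝ)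
    (hQ : Qᵀ * Q = 1)
    (hQR : ((n : ℝ) - 1) ^ (-(1 : ℝ)/2) • Xᵀ = Q * R)
    (U V : Matrix (Fin p) (Fin p) ℝ) (σ : Fin p → ℝ)
    (hU : Uᵀ * U = 1) (hV : Vᵀ * V = 1) (hσ : ∀ i, 0 ≤ σ i)
    (hSVD : R = U * Matrix.diagonal σ * Vᵀ) :
    (((n : ℝ) - 1) ^ (-(1 : ℝ)/2) • Xᵀ = (Q * U) * Matrix.diagonal σ * Vᵀ ∧
      (Q * U)ᵀ * (Q * U) = 1) ∧
    cov X = V * (Matrix.diagonal σ * Matrix.diagonal σ) * Vᵀ ∧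
    ((V * Matrix.diagonal σ * Vᵀ).PosSemidef ∧
      (V * Matrix.diagonal σ * Vᵀ) * (V * Matrix.diagonal σ * Vᵀ) = cov X) := by
  have hcov : cov X = V * (diagonal σ * diagonal σ) * Vᵀ := by
    rw [cov_eq_transpose_mul_self_of_qr (by omega) hQ hQR, hSVD, Matrix.mul_assoc U,
      transpose_mul_self_mul_of_transpose_mul_self_eq_one hU, transpose_mul, transpose_transpose,
      diagonal_transpose, Matrix.mul_assoc, Matrix.mul_assoc, Matrix.mul_assoc]
  refine ⟨⟨?_, ?_⟩, hcov, posSemidef_conj_diagonal V hσ, ?_⟩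
  · simp only [hQR, hSVD, Matrix.mul_assoc]
  · rw [transpose_mul_self_mul_of_transpose_mul_self_eq_one hQ, hU]
  · rw [hcov, conj_mul_conj_of_transpose_mul_self_eq_one hV]

/-- If `R = U * Σ * Vᵀ` is an SVD of the triangular factor `R`, then
(i) `(1/√(n-1)) • Xᵀ = (Q * U) * Σ * Vᵀ` with `Q * U` having orthonormal columns
(an economy-size SVD of `Xᵀ`), (ii) `cov(X) = V * Σ² * Vᵀ`, and (iii) `V * Σ * Vᵀ` is the
positive semidefinite symmetric square root of `cov(X)`. -/
theorem stmt_15 {p n : ℕ} (hp : 0 < p) (hpn : p < n)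
    (X : Matrix (Fin p) (Fin n) ℝ)
    (hXc : X *ᵥ (fun _ => (1 : ℝ)) = 0)
    (Q : Matrix (Fin n) (Fin p) ℝ) (R : Matrix (Fin p) (Fin p) ℝ)
    (hQ : Qᵀ * Q = 1)
    (hR : R.BlockTriangular id)
    (hQR : ((n : ℝ) - 1) ^ (-(1 : ℝ)/2) • Xᵀ = Q * R)
    (U V : Matrix (Fin p) (Fin p) ℝ) (σ : Fin p → ℝ)
    (hU : Uᵀ * U = 1) (hV : Vᵀ * V = 1) (hσ : ∀ i, 0 ≤ σ i)
    (hSVD : R = U * Matrix.diagonal σ * Vᵀ) :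
    (((n : ℝ) - 1) ^ (-(1 : ℝ)/2) • Xᵀ = (Q * U) * Matrix.diagonal σ * Vᵀ ∧
      (Q * U)ᵀ * (Q * U) = 1) ∧
    cov X = V * (Matrix.diagonal σ * Matrix.diagonal σ) * Vᵀ ∧
    ((V * Matrix.diagonal σ * Vᵀ).PosSemidef ∧
      (V * Matrix.diagonal σ * Vᵀ) * (V * Matrix.diagonal σ * Vᵀ) = cov X) :=
  stmt_15_general hpn X Q R hQ hQR U V σ hU hV hσ hSVD
end
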